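/- arXiv:2404.15983 — 9 statements merged into one kernel-verified Lean document; each statement's English description precedes it below -/
import Mathlib

section
/- Define, for natural numbers j ≤ p and real r > 0, λ^p_j(r) := (p+1) · (p choose j) · ∫_{0}^{r²} t^j / (1+t)^{p+2} dt. Then for every j with 0 ≤ j ≤ p one has (r²/(1+r²))^{p+1} ≤ λ^p_j(r) ≤ 1 − (1+r²)^{-(p+1)}; moreover λ^p_0(r) = 1 − (1+r²)^{-(p+1)} and λ^p_p(r) = (r²/(1+r²))^{p+1}. In particular the maximum of λ^p_j(r) over j is attained at j = 0 and the minimum at j = p. -/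
open MeasureTheory

/-- The eigenvalue `λ^p_j(r)` of the Toeplitz operator with symbol the indicator of the
disc of radius `r` on `ℂP¹`, in the orthonormal monomial basis. -/
noncomputable def toeplitzIndicatorEigenvalue (p j : ℕ) (r : ℝ) : ℝ :=
  ((p : ℝ) + 1) * (p.choose j) * ∫ t in (0 : ℝ)..(r ^ 2), t ^ j / (1 + t) ^ (p + 2)

/-!
Write `s = r²` and `A_j = ∫₀ˢ tʲ/(1+t)^(p+2) dt`. Differentiating `t^(j+1)/(1+t)^(p+1)` gives
`(j+1) A_j - (p-j) A_{j+1} = s^(j+1)/(1+s)^(p+1)`, which together with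
`(j+1) C(p,j+1) = (p-j) C(p,j)` turns into
`λ_j - λ_{j+1} = C(p+1,j+1) s^(j+1)/(1+s)^(p+1) ≥ 0`.
Hence `j ↦ λ_j` is antitone. Since `λ_{p+1} = 0`, the case `j = p` of this identity gives `λ_p`,
while `λ_0` is an elementary integral.
-/

open Set

lemma one_add_pos_of_mem_uIcc {s t : ℝ} (hs : -1 < s) (ht : t ∈ uIcc 0 s) : 0 < 1 + t := by
  rcases le_total 0 s with h | h
  · rw [uIcc_of_le h] at ht; linarith [ht.1]
  · rw [uIcc_of_ge h] at ht; linarith [ht.1]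

lemma intervalIntegrable_pow_div_one_add_pow (j n : ℕ) {s : ℝ} (hs : -1 < s) :
    IntervalIntegrable (fun t : ℝ => t ^ j / (1 + t) ^ n) volume 0 s :=
  ContinuousOn.intervalIntegrable <| by
    refine ContinuousOn.div (by fun_prop) (by fun_prop) fun t ht => ?_
    exact pow_ne_zero _ (one_add_pos_of_mem_uIcc hs ht).ne'

lemma hasDerivAt_pow_succ_div_one_add_pow_succ (j p : ℕ) {t : ℝ} (ht : 0 < 1 + t) :
    HasDerivAt (fun t : ℝ => t ^ (j + 1) / (1 + t) ^ (p + 1))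
      (((j : ℝ) + 1) * (t ^ j / (1 + t) ^ (p + 2))
        - ((p : ℝ) - j) * (t ^ (j + 1) / (1 + t) ^ (p + 2))) t := by
  refine ((hasDerivAt_pow (j + 1) t).div (((hasDerivAt_id' t).const_add 1).fun_pow (p + 1))
    (pow_ne_zero _ ht.ne')).congr_deriv ?_
  simp only [add_tsub_cancel_right, mul_one]
  field_simp
  push_cast
  ring

lemma hasDerivAt_neg_inv_one_add_pow_succ (p : ℕ) {t : ℝ} (ht : 0 < 1 + t) :
    HasDerivAt (fun t : ℝ => -((1 + t) ^ (p + 1))⁻¹)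
      (((p : ℝ) + 1) * (1 / (1 + t) ^ (p + 2))) t := by
  refine ((((hasDerivAt_id' t).const_add 1).fun_pow (p + 1)).inv
    (pow_ne_zero _ ht.ne')).neg.congr_deriv ?_
  simp only [add_tsub_cancel_right, mul_one]
  field_simp
  push_cast
  ring

theorem integral_pow_div_one_add_pow_recurrence (p j : ℕ) {s : ℝ} (hs : -1 < s) :
    ((j : ℝ) + 1) * (∫ t in (0 : ℝ)..s, t ^ j / (1 + t) ^ (p + 2))
      - ((p : ℝ) - j) * (∫ t in (0 : ℝ)..s, t ^ (j + 1) / (1 + t) ^ (p + 2))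
      = s ^ (j + 1) / (1 + s) ^ (p + 1) := by
  have hj := (intervalIntegrable_pow_div_one_add_pow j (p + 2) hs).const_mul ((j : ℝ) + 1)
  have hj' := (intervalIntegrable_pow_div_one_add_pow (j + 1) (p + 2) hs).const_mul ((p : ℝ) - j)
  rw [← intervalIntegral.integral_const_mul, ← intervalIntegral.integral_const_mul,
    ← intervalIntegral.integral_sub hj hj', intervalIntegral.integral_eq_sub_of_hasDerivAt
      (fun t ht => hasDerivAt_pow_succ_div_one_add_pow_succ j p (one_add_pos_of_mem_uIcc hs ht))
      (hj.sub hj')]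
  simp

theorem integral_one_div_one_add_pow (p : ℕ) {s : ℝ} (hs : -1 < s) :
    ((p : ℝ) + 1) * ∫ t in (0 : ℝ)..s, 1 / (1 + t) ^ (p + 2) = 1 - ((1 + s) ^ (p + 1))⁻¹ := by
  have hint := (intervalIntegrable_pow_div_one_add_pow 0 (p + 2) hs).const_mul ((p : ℝ) + 1)
  simp only [pow_zero] at hint
  rw [← intervalIntegral.integral_const_mul, intervalIntegral.integral_eq_sub_of_hasDerivAt
    (fun t ht => hasDerivAt_neg_inv_one_add_pow_succ p (one_add_pos_of_mem_uIcc hs ht)) hint]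
  simp
  ring

lemma Nat.cast_choose_succ_right_mul (p j : ℕ) :
    (p.choose (j + 1) : ℝ) * (j + 1) = p.choose j * ((p : ℝ) - j) := by
  rcases le_or_gt j p with h | h
  · have h' := congrArg (Nat.cast : ℕ → ℝ) (Nat.choose_succ_right_eq p j)
    push_cast [Nat.cast_sub h] at h'
    exact h'
  · simp [Nat.choose_eq_zero_of_lt h, Nat.choose_eq_zero_of_lt (h.trans (Nat.lt_succ_self j))]

theorem toeplitzIndicatorEigenvalue_sub_succ (p j : ℕ) (r : ℝ) :
    toeplitzIndicatorEigenvalue p j r - toeplitzIndicatorEigenvalue p (j + 1) r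
      = (p + 1).choose (j + 1) * (r ^ 2) ^ (j + 1) / (1 + r ^ 2) ^ (p + 1) := by
  have hrec := integral_pow_div_one_add_pow_recurrence p j
    (neg_one_lt_zero.trans_le (sq_nonneg r))
  have hpascal : ((p : ℝ) + 1) * p.choose j = (p + 1).choose (j + 1) * ((j : ℝ) + 1) := by
    exact_mod_cast Nat.add_one_mul_choose_eq p j
  refine mul_left_cancel₀ (Nat.cast_add_one_ne_zero j) ?_
  unfold toeplitzIndicatorEigenvalue
  set A := ∫ t in (0 : ℝ)..(r ^ 2), t ^ j / (1 + t) ^ (p + 2)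
  set B := ∫ t in (0 : ℝ)..(r ^ 2), t ^ (j + 1) / (1 + t) ^ (p + 2)
  rw [mul_div_assoc, ← hrec]
  linear_combination ((j + 1) * A - (p - j) * B) * hpascal
    - (p + 1) * B * Nat.cast_choose_succ_right_mul p j

theorem toeplitzIndicatorEigenvalue_of_lt {p j : ℕ} (h : p < j) (r : ℝ) :
    toeplitzIndicatorEigenvalue p j r = 0 := by
  simp [toeplitzIndicatorEigenvalue, Nat.choose_eq_zero_of_lt h]

theorem toeplitzIndicatorEigenvalue_zero (p : ℕ) (r : ℝ) :
    toeplitzIndicatorEigenvalue p 0 r = 1 - ((1 + r ^ 2) ^ (p + 1))⁻¹ := by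
  simpa [toeplitzIndicatorEigenvalue] using
    integral_one_div_one_add_pow p (neg_one_lt_zero.trans_le (sq_nonneg r))

theorem toeplitzIndicatorEigenvalue_self (p : ℕ) (r : ℝ) :
    toeplitzIndicatorEigenvalue p p r = (r ^ 2 / (1 + r ^ 2)) ^ (p + 1) := by
  simpa [toeplitzIndicatorEigenvalue_of_lt (Nat.lt_succ_self p), div_pow] using
    toeplitzIndicatorEigenvalue_sub_succ p p r

theorem toeplitzIndicatorEigenvalue_antitone (p : ℕ) (r : ℝ) :
    Antitone fun j => toeplitzIndicatorEigenvalue p j r :=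
  antitone_nat_of_succ_le fun j => sub_nonneg.mp <| by
    rw [toeplitzIndicatorEigenvalue_sub_succ]
    positivity

theorem toeplitz_indicator_eigenvalue_bounds_general (p j : ℕ) (hj : j ≤ p) (r : ℝ) :
    (r ^ 2 / (1 + r ^ 2)) ^ (p + 1) ≤ toeplitzIndicatorEigenvalue p j r ∧
    toeplitzIndicatorEigenvalue p j r ≤ 1 - ((1 + r ^ 2) ^ (p + 1))⁻¹ ∧
    toeplitzIndicatorEigenvalue p 0 r = 1 - ((1 + r ^ 2) ^ (p + 1))⁻¹ ∧
    toeplitzIndicatorEigenvalue p p r = (r ^ 2 / (1 + r ^ 2)) ^ (p + 1) := by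
  have hanti := toeplitzIndicatorEigenvalue_antitone p r
  refine ⟨?_, ?_, toeplitzIndicatorEigenvalue_zero p r, toeplitzIndicatorEigenvalue_self p r⟩
  · exact toeplitzIndicatorEigenvalue_self p r ▸ hanti hj
  · exact toeplitzIndicatorEigenvalue_zero p r ▸ hanti (Nat.zero_le j)

/-- Bounds on the eigenvalues: the maximum `1 - (1+r²)^{-(p+1)}` is attained at `j = 0`
and the minimum `(r²/(1+r²))^{p+1}` is attained at `j = p`. -/
theorem toeplitz_indicator_eigenvalue_bounds (p j : ℕ) (hj : j ≤ p) (r : ℝ) (hr : 0 < r) :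
    (r ^ 2 / (1 + r ^ 2)) ^ (p + 1) ≤ toeplitzIndicatorEigenvalue p j r ∧
    toeplitzIndicatorEigenvalue p j r ≤ 1 - ((1 + r ^ 2) ^ (p + 1))⁻¹ ∧
    toeplitzIndicatorEigenvalue p 0 r = 1 - ((1 + r ^ 2) ^ (p + 1))⁻¹ ∧
    toeplitzIndicatorEigenvalue p p r = (r ^ 2 / (1 + r ^ 2)) ^ (p + 1) :=
  toeplitz_indicator_eigenvalue_bounds_general p j hj r
end

section
/- Fix a natural number k ≥ 1. There exists a constant C > 0 such that for every natural number p ≥ 1, | p^k · (p+1)! / (p+k+1)! − (1 − k(k+3)/(2p)) | ≤ C / p². Equivalently, the smallest Toeplitz eigenvalue λ^p_min(f_k) = k! · (p+1)!/(p+k+1)! satisfies λ^p_min(f_k) = k! · p^{-k} · (1 − k(k+3)/(2p) + O(p^{-2})) as p → ∞. -/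
theorem toeplitz_aux (k : ℕ) :
    ∃ C > 0, ∀ p : ℕ, 1 ≤ p →
      |(p : ℝ) ^ k * ((p + 1).factorial : ℝ) / ((p + k + 1).factorial : ℝ) -
        (1 - ((k : ℝ) * ((k : ℝ) + 3)) / (2 * (p : ℝ)))| ≤ C / (p : ℝ) ^ 2 := by
  induction k with
  | zero =>
    refine ⟨1, one_pos, fun p hp => ?_⟩
    have hp0 : (0:ℝ) < p := by exact_mod_cast hp
    have h1 : p + 0 + 1 = p + 1 := by ring
    rw [h1]
    have hf : ((p+1).factorial : ℝ) ≠ 0 := by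
      exact_mod_cast (Nat.factorial_pos (p+1)).ne'
    rw [pow_zero, one_mul, div_self hf]
    simp only [Nat.cast_zero, zero_mul, zero_add, zero_div, sub_zero, mul_zero]
    norm_num
  | succ k ih =>
    obtain ⟨C, hC, h⟩ := ih
    set B : ℝ := ((k:ℝ)+2) * (((k:ℝ)+2) + (k:ℝ)*((k:ℝ)+3)/2) with hB
    have hBpos : 0 < B := by positivity
    refine ⟨C + B, by positivity, fun p hp => ?_⟩
    have hp0 : (0:ℝ) < p := by exact_mod_cast hp
    have hq : (0:ℝ) < (p:ℝ) + (k:ℝ) + 2 := by positivity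
    have hfne : ((p + k + 1).factorial : ℝ) ≠ 0 := by
      exact_mod_cast (Nat.factorial_pos (p+k+1)).ne'
    have hfact : ((p + (k+1) + 1).factorial : ℝ)
        = ((p:ℝ) + (k:ℝ) + 2) * ((p + k + 1).factorial : ℝ) := by
      have he : p + (k+1) + 1 = (p + k + 1) + 1 := by ring
      rw [he, Nat.factorial_succ]
      push_cast
      ring
    set A : ℝ := (p : ℝ) ^ k * ((p + 1).factorial : ℝ) / ((p + k + 1).factorial : ℝ) with hA
    have hF : (p : ℝ) ^ (k+1) * ((p + 1).factorial : ℝ) / ((p + (k+1) + 1).factorial : ℝ)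
        = A * ((p:ℝ) / ((p:ℝ) + (k:ℝ) + 2)) := by
      rw [hfact, hA]
      field_simp
      ring
    have key : A * ((p:ℝ)/((p:ℝ)+(k:ℝ)+2))
          - (1 - (((k:ℝ)+1)*(((k:ℝ)+1)+3))/(2*(p:ℝ)))
        = ((p:ℝ)/((p:ℝ)+(k:ℝ)+2)) * (A - (1 - ((k:ℝ)*((k:ℝ)+3))/(2*(p:ℝ))))
          + B / ((p:ℝ)*((p:ℝ)+(k:ℝ)+2)) := by
      rw [hB]
      field_simp
      ring
    have hgoal : ((p : ℝ) ^ (k+1) * ((p + 1).factorial : ℝ)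
          / ((p + (k+1) + 1).factorial : ℝ) -
        (1 - ((((k:ℕ)+1 : ℕ):ℝ) * ((((k:ℕ)+1 : ℕ):ℝ) + 3)) / (2 * (p : ℝ))))
        = ((p:ℝ)/((p:ℝ)+(k:ℝ)+2)) * (A - (1 - ((k:ℝ)*((k:ℝ)+3))/(2*(p:ℝ))))
          + B / ((p:ℝ)*((p:ℝ)+(k:ℝ)+2)) := by
      rw [hF]
      push_cast
      exact key
    calc |(p : ℝ) ^ (k+1) * ((p + 1).factorial : ℝ) / ((p + (k+1) + 1).factorial : ℝ) -
          (1 - ((((k:ℕ)+1 : ℕ):ℝ) * ((((k:ℕ)+1 : ℕ):ℝ) + 3)) / (2 * (p : ℝ)))|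
        = |((p:ℝ)/((p:ℝ)+(k:ℝ)+2)) * (A - (1 - ((k:ℝ)*((k:ℝ)+3))/(2*(p:ℝ))))
            + B / ((p:ℝ)*((p:ℝ)+(k:ℝ)+2))| := by rw [hgoal]
      _ ≤ |((p:ℝ)/((p:ℝ)+(k:ℝ)+2))| * |A - (1 - ((k:ℝ)*((k:ℝ)+3))/(2*(p:ℝ)))|
            + |B / ((p:ℝ)*((p:ℝ)+(k:ℝ)+2))| := by
          rw [← abs_mul]; exact abs_add_le _ _
      _ ≤ 1 * (C / (p:ℝ)^2) + B / ((p:ℝ)^2) := by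
          gcongr
          · rw [abs_of_pos (by positivity)]
            rw [div_le_one hq]
            linarith
          · exact h p hp
          · rw [abs_of_pos (by positivity)]
            rw [div_le_div_iff₀ (by positivity) (by positivity)]
            have : (p:ℝ)^2 ≤ (p:ℝ)*((p:ℝ)+(k:ℝ)+2) := by nlinarith
            nlinarith
      _ = (C + B) / (p:ℝ)^2 := by ring

/-- Second-order asymptotics of the smallest Toeplitz eigenvalue
`λ^p_min(f_k) = k!·(p+1)!/(p+k+1)!`: one has
`p^k·(p+1)!/(p+k+1)! = 1 - k(k+3)/(2p) + O(p^{-2})`. -/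
theorem toeplitz_fk_min_eigenvalue_asymptotics (k : ℕ) (hk : 1 ≤ k) :
    ∃ C > 0, ∀ p : ℕ, 1 ≤ p →
      |(p : ℝ) ^ k * ((p + 1).factorial : ℝ) / ((p + k + 1).factorial : ℝ) -
        (1 - ((k : ℝ) * ((k : ℝ) + 3)) / (2 * (p : ℝ)))| ≤ C / (p : ℝ) ^ 2 := by
  exact toeplitz_aux k
end

section
/- For all natural numbers p and j with j ≤ p, one has (p+1) · (p choose j) · ∫_{0}^{∞} e^{-1/t} · t^j / (1+t)^{p+2} dt = (1/j!) · ∫_{0}^{∞} e^{-t} · t^{p+1} · (1+t)^{j-p-1} dt, where both improper integrals over (0,∞) converge absolutely. -/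
/-!
After the substitution `t ↦ 1/t` the left-hand integral becomes
`J(a, b) = ∫₀^∞ e^{-t} t^a (1+t)^{-(b+1)} dt` with `a = p - j`, `b = p + 1`, and the right-hand one
is `J(b, a)`. Since `∫₀^∞ s^b e^{-(1+t)s} ds = b! (1+t)^{-(b+1)}`, the quantity `b! J(a, b)` is the
double integral of `t^a s^b e^{-(t+s+ts)}` over the positive quadrant, which is symmetric in
`(t, a) ↔ (s, b)`; so Fubini gives `b! J(a, b) = a! J(b, a)`, and the factorials are those of
`(p + 1) · (p choose j) = (p + 1)! / (j! (p - j)!)`.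
-/

open MeasureTheory Set Real
open scoped Nat

theorem integral_comp_inv_Ioi {E : Type*} [NormedAddCommGroup E] [NormedSpace ℝ E] (g : ℝ → E) :
    ∫ x in Ioi 0, (x ^ 2)⁻¹ • g x⁻¹ = ∫ y in Ioi 0, g y := by
  rw [← integral_comp_rpow_Ioi g (p := -1) (by norm_num)]
  refine setIntegral_congr_fun measurableSet_Ioi fun x hx => ?_
  norm_num [rpow_neg_one, rpow_neg (le_of_lt hx)]

theorem integrableOn_pow_mul_exp_neg_Ioi (n : ℕ) :
    IntegrableOn (fun t : ℝ => t ^ n * exp (-t)) (Ioi 0) := by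
  refine (GammaIntegral_convergent (s := n + 1) (by positivity)).congr_fun (fun t _ => ?_)
    measurableSet_Ioi
  simp [mul_comm]

theorem integral_pow_mul_exp_neg_mul_Ioi (n : ℕ) {r : ℝ} (hr : 0 < r) :
    ∫ s in Ioi 0, s ^ n * exp (-(r * s)) = n ! / r ^ (n + 1) := by
  have h := integral_rpow_mul_exp_neg_mul_Ioi (a := n + 1) (by positivity) hr
  norm_num [← rpow_natCast, Gamma_nat_eq_factorial] at h ⊢
  rw [h, inv_rpow hr.le, div_eq_inv_mul]

theorem integrable_pow_mul_pow_mul_exp_neg_add_add_mul (a b : ℕ) :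
    Integrable (fun z : ℝ × ℝ => z.1 ^ a * z.2 ^ b * exp (-(z.1 + z.2 + z.1 * z.2)))
      ((volume.restrict (Ioi 0)).prod (volume.restrict (Ioi 0))) := by
  refine ((integrableOn_pow_mul_exp_neg_Ioi a).mul_prod
    (integrableOn_pow_mul_exp_neg_Ioi b)).mono' (by fun_prop) ?_
  rw [Measure.prod_restrict, ae_restrict_iff' (measurableSet_Ioi.prod measurableSet_Ioi)]
  refine Filter.Eventually.of_forall fun ⟨t, s⟩ ⟨(ht : 0 < t), (hs : 0 < s)⟩ => ?_
  rw [Real.norm_of_nonneg (by positivity)]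
  calc t ^ a * s ^ b * exp (-(t + s + t * s)) ≤ t ^ a * s ^ b * exp (-(t + s)) := by
        gcongr t ^ a * s ^ b * exp ?_
        nlinarith [mul_pos ht hs]
    _ = t ^ a * exp (-t) * (s ^ b * exp (-s)) := by rw [neg_add, exp_add]; ring

theorem integral_pow_mul_pow_mul_exp_neg_add_add_mul (a b : ℕ) {t : ℝ} (ht : -1 < t) :
    ∫ s in Ioi 0, t ^ a * s ^ b * exp (-(t + s + t * s)) =
      b ! * (exp (-t) * t ^ a / (1 + t) ^ (b + 1)) := by
  have hsplit : ∀ s, t ^ a * s ^ b * exp (-(t + s + t * s)) =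
      t ^ a * exp (-t) * (s ^ b * exp (-((1 + t) * s))) := fun s => by
    rw [show -(t + s + t * s) = -t + -((1 + t) * s) by ring, exp_add]
    ring
  simp_rw [hsplit]
  rw [integral_const_mul, integral_pow_mul_exp_neg_mul_Ioi b (by linarith)]
  ring

theorem integral_integral_pow_mul_pow_mul_exp_neg_add_add_mul (a b : ℕ) :
    ∫ t in Ioi 0, ∫ s in Ioi 0, t ^ a * s ^ b * exp (-(t + s + t * s)) =
      b ! * ∫ t in Ioi 0, exp (-t) * t ^ a / (1 + t) ^ (b + 1) := by
  rw [← integral_const_mul]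
  exact setIntegral_congr_fun measurableSet_Ioi fun t (ht : 0 < t) =>
    integral_pow_mul_pow_mul_exp_neg_add_add_mul a b (by linarith)

theorem factorial_mul_integral_exp_neg_mul_pow_div_comm (a b : ℕ) :
    b ! * ∫ t in Ioi 0, exp (-t) * t ^ a / (1 + t) ^ (b + 1) =
      a ! * ∫ t in Ioi 0, exp (-t) * t ^ b / (1 + t) ^ (a + 1) := by
  rw [← integral_integral_pow_mul_pow_mul_exp_neg_add_add_mul,
    ← integral_integral_pow_mul_pow_mul_exp_neg_add_add_mul,
    integral_integral_swap (integrable_pow_mul_pow_mul_exp_neg_add_add_mul a b)]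
  congr! 4 with s t
  ring_nf

theorem integral_exp_neg_one_div_mul_pow_div (j a : ℕ) :
    ∫ t in Ioi 0, exp (-1 / t) * t ^ j / (1 + t) ^ (j + a + 2) =
      ∫ t in Ioi 0, exp (-t) * t ^ a / (1 + t) ^ (j + a + 2) := by
  rw [← integral_comp_inv_Ioi (fun t => exp (-t) * t ^ a / (1 + t) ^ (j + a + 2))]
  refine setIntegral_congr_fun measurableSet_Ioi fun x (hx : 0 < x) => ?_
  rw [smul_eq_mul, neg_div, one_div, show 1 + x⁻¹ = (1 + x) / x by field_simp; ring,
    div_pow, inv_pow, pow_add x, pow_add x]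
  field_simp

/-- Rewriting of the eigenvalues of the Toeplitz operator with symbol `e^{-1/|z|²}`. -/
theorem toeplitz_expSymbol_eigenvalue_rewrite (p j : ℕ) (hj : j ≤ p) :
    ((p : ℝ) + 1) * (p.choose j) *
      ∫ t in Set.Ioi (0 : ℝ), Real.exp (-1 / t) * t ^ j / (1 + t) ^ (p + 2) =
    (1 / (j.factorial : ℝ)) *
      ∫ t in Set.Ioi (0 : ℝ),
        Real.exp (-t) * t ^ (p + 1) * (1 + t) ^ ((j : ℤ) - (p : ℤ) - 1) := by
  obtain ⟨a, rfl⟩ := Nat.exists_eq_add_of_le hj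
  have hzpow (t : ℝ) : (1 + t) ^ ((j : ℤ) - ((j + a : ℕ) : ℤ) - 1) = ((1 + t) ^ (a + 1))⁻¹ := by
    rw [← zpow_natCast, ← zpow_neg]
    congr 1
    push_cast
    ring
  have hchoose : (j + a + 1) * (j + a).choose j * j ! * a ! = (j + a + 1)! := by
    rw [Nat.factorial_succ, ← Nat.choose_mul_factorial_mul_factorial (Nat.le_add_right j a),
      Nat.add_sub_cancel_left]
    ring
  have hsymm := factorial_mul_integral_exp_neg_mul_pow_div_comm a (j + a + 1)
  rw [← hchoose] at hsymm
  simp_rw [hzpow, ← div_eq_mul_inv]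
  rw [integral_exp_neg_one_div_mul_pow_div]
  field_simp
  apply mul_left_cancel₀ (Nat.cast_ne_zero.mpr a.factorial_ne_zero : (a ! : ℝ) ≠ 0)
  push_cast at hsymm ⊢
  linear_combination hsymm
end

section
/- For natural numbers p and j with j ≤ p, define λ^p_j := (1/j!) · ∫_{0}^{∞} e^{-t} · t^{p+1} · (1+t)^{j-p-1} dt. Then for every j with 0 ≤ j ≤ p−1 one has λ^p_j < λ^p_{j+1}; that is, λ^p_0 < λ^p_1 < ⋯ < λ^p_p. -/
open MeasureTheory

/-- The eigenvalue `λ^p_j` of the Toeplitz operator on `ℂP¹` with radial symbol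
`e^{-1/|z|²}`. -/
noncomputable def toeplitzExpEigenvalue (p j : ℕ) : ℝ :=
  (1 / (j.factorial : ℝ)) *
    ∫ t in Set.Ioi (0 : ℝ),
      Real.exp (-t) * t ^ (p + 1) * (1 + t) ^ ((j : ℤ) - (p : ℤ) - 1)

/-!
Integrating over `(0, ∞)` the derivative of `e^{-t} t^{p+1} (1+t)^{j-p}`, which vanishes at both
ends, gives `(j+1)! (λ^p_{j+1} - λ^p_j) = (p+1) ∫₀^∞ e^{-t} t^p (1+t)^{j-p-1} dt > 0`.
-/

open Real Set Filter Topology Asymptotics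

noncomputable def expPolyIntegrand (n : ℕ) (z : ℤ) (t : ℝ) : ℝ :=
  exp (-t) * t ^ n * (1 + t) ^ z

/-- `expPolyIntegral n z = n! U(n+1, n+z+2, 1)` with `U` Tricomi's confluent hypergeometric
function; `expPolyIntegral_succ_zpow_add_one` is one of its contiguous relations. -/
noncomputable def expPolyIntegral (n : ℕ) (z : ℤ) : ℝ :=
  ∫ t in Ioi (0 : ℝ), expPolyIntegrand n z t

lemma isLittleO_one_add_zpow_exp_mul_atTop (z : ℤ) {b : ℝ} (hb : 0 < b) :
    (fun t : ℝ => (1 + t) ^ z) =o[atTop] fun t => exp (b * t) := by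
  have h := (isLittleO_zpow_exp_pos_mul_atTop z hb).comp_tendsto
    (tendsto_atTop_add_const_left atTop (1 : ℝ) tendsto_id)
  refine h.trans_isBigO (IsBigO.of_bound (exp b) (Eventually.of_forall fun t => ?_))
  simp [mul_add, exp_add, abs_exp]

lemma expPolyIntegrand_isBigO_exp_neg (n : ℕ) (z : ℤ) :
    expPolyIntegrand n z =O[atTop] fun t => exp (-(1 / 2) * t) := by
  have hpoly : (fun t : ℝ => t ^ n * (1 + t) ^ z) =o[atTop]
      fun t => exp (1 / 4 * t) * exp (1 / 4 * t) :=
    (isLittleO_pow_exp_pos_mul_atTop n (by norm_num)).mul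
      (isLittleO_one_add_zpow_exp_mul_atTop z (by norm_num))
  refine ((isBigO_refl (fun t => exp (-t)) atTop).mul hpoly.isBigO).congr
    (fun t => by simp only [expPolyIntegrand]; ring) (fun t => ?_)
  rw [← exp_add, ← exp_add]
  ring_nf

lemma continuousOn_expPolyIntegrand (n : ℕ) (z : ℤ) :
    ContinuousOn (expPolyIntegrand n z) (Ici 0) := by
  refine (by fun_prop : Continuous fun t : ℝ => exp (-t) * t ^ n).continuousOn.mul ?_
  exact ContinuousOn.zpow₀ (by fun_prop) z fun t (ht : 0 ≤ t) => Or.inl (by positivity)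

lemma integrableOn_expPolyIntegrand (n : ℕ) (z : ℤ) :
    IntegrableOn (expPolyIntegrand n z) (Ioi 0) :=
  integrable_of_isBigO_exp_neg (by norm_num) (continuousOn_expPolyIntegrand n z)
    (expPolyIntegrand_isBigO_exp_neg n z)

lemma tendsto_expPolyIntegrand_atTop (n : ℕ) (z : ℤ) :
    Tendsto (expPolyIntegrand n z) atTop (𝓝 0) := by
  refine (expPolyIntegrand_isBigO_exp_neg n z).trans_tendsto ?_
  exact tendsto_exp_atBot.comp (tendsto_id.const_mul_atTop_of_neg (by norm_num))

lemma expPolyIntegrand_zpow_add_one (n : ℕ) (z : ℤ) {t : ℝ} (ht : 1 + t ≠ 0) :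
    expPolyIntegrand n (z + 1) t = expPolyIntegrand (n + 1) z t + expPolyIntegrand n z t := by
  simp only [expPolyIntegrand, zpow_add_one₀ ht]
  ring

lemma hasDerivAt_expPolyIntegrand (n : ℕ) (z : ℤ) {t : ℝ} (ht : 1 + t ≠ 0) :
    HasDerivAt (expPolyIntegrand (n + 1) (z + 1))
      ((n + 1) * expPolyIntegrand n (z + 1) t + (z + 1) * expPolyIntegrand (n + 1) z t
        - expPolyIntegrand (n + 1) (z + 1) t) t := by
  have h := (((hasDerivAt_neg t).exp).mul (hasDerivAt_pow (n + 1) t)).mul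
    ((hasDerivAt_zpow (z + 1) (1 + t) (Or.inl ht)).comp t ((hasDerivAt_id t).const_add 1))
  refine h.congr_deriv ?_
  simp only [expPolyIntegrand, Function.comp_apply, Pi.mul_apply, add_tsub_cancel_right,
    zpow_add_one₀ ht]
  push_cast
  ring

lemma expPolyIntegral_pos (n : ℕ) (z : ℤ) : 0 < expPolyIntegral n z := by
  have hpos : ∀ t ∈ Ioi (0 : ℝ), 0 < expPolyIntegrand n z t := fun t (ht : 0 < t) => by
    unfold expPolyIntegrand; positivity
  rw [expPolyIntegral, setIntegral_pos_iff_support_of_nonneg_ae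
    ((ae_restrict_iff' measurableSet_Ioi).2 (Eventually.of_forall fun t ht => (hpos t ht).le))
    (integrableOn_expPolyIntegrand n z)]
  have hsupp : Function.support (expPolyIntegrand n z) ∩ Ioi 0 = Ioi 0 :=
    inter_eq_right.2 fun t ht => (hpos t ht).ne'
  simp [hsupp]

lemma expPolyIntegral_zpow_add_one (n : ℕ) (z : ℤ) :
    expPolyIntegral n (z + 1) = expPolyIntegral (n + 1) z + expPolyIntegral n z := by
  rw [expPolyIntegral, expPolyIntegral, expPolyIntegral, ← integral_add
    (integrableOn_expPolyIntegrand _ _) (integrableOn_expPolyIntegrand _ _)]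
  exact setIntegral_congr_fun measurableSet_Ioi fun t (ht : 0 < t) =>
    expPolyIntegrand_zpow_add_one n z (by positivity)

lemma expPolyIntegral_succ_zpow_add_one (n : ℕ) (z : ℤ) :
    expPolyIntegral (n + 1) (z + 1) =
      (n + 1) * expPolyIntegral n z + (n + z + 2) * expPolyIntegral (n + 1) z := by
  have hint : IntegrableOn (fun t => (n + 1) * expPolyIntegrand n (z + 1) t
      + (z + 1) * expPolyIntegrand (n + 1) z t) (Ioi 0) :=
    ((integrableOn_expPolyIntegrand n (z + 1)).const_mul _).add
      ((integrableOn_expPolyIntegrand (n + 1) z).const_mul _)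
  have hparts := integral_Ioi_of_hasDerivAt_of_tendsto
    ((continuousOn_expPolyIntegrand (n + 1) (z + 1)).continuousWithinAt self_mem_Ici)
    (fun t (ht : 0 < t) => hasDerivAt_expPolyIntegrand n z (by positivity))
    (hint.sub (integrableOn_expPolyIntegrand (n + 1) (z + 1)))
    (tendsto_expPolyIntegrand_atTop (n + 1) (z + 1))
  rw [integral_sub hint (integrableOn_expPolyIntegrand _ _),
    integral_add ((integrableOn_expPolyIntegrand _ _).const_mul _)
      ((integrableOn_expPolyIntegrand _ _).const_mul _),
    integral_const_mul, integral_const_mul] at hparts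
  have hzero : expPolyIntegrand (n + 1) (z + 1) 0 = 0 := by simp [expPolyIntegrand]
  change (n + 1) * expPolyIntegral n (z + 1) + (z + 1) * expPolyIntegral (n + 1) z
    - expPolyIntegral (n + 1) (z + 1) = 0 - expPolyIntegrand (n + 1) (z + 1) 0 at hparts
  rw [hzero, expPolyIntegral_zpow_add_one] at hparts
  linear_combination -hparts

theorem toeplitzExpEigenvalue_strictMono_general (p j : ℕ) :
    toeplitzExpEigenvalue p j < toeplitzExpEigenvalue p (j + 1) := by
  have hrec := expPolyIntegral_succ_zpow_add_one p ((j : ℤ) - p - 1)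
  have hz : ((j : ℤ) - p - 1) + 1 = ((j + 1 : ℕ) : ℤ) - p - 1 := by push_cast; ring
  rw [hz] at hrec
  have hgap : toeplitzExpEigenvalue p (j + 1) - toeplitzExpEigenvalue p j =
      (p + 1) * expPolyIntegral p ((j : ℤ) - p - 1) / (j + 1).factorial := by
    change 1 / _ * expPolyIntegral (p + 1) _ - 1 / _ * expPolyIntegral (p + 1) _ = _
    rw [hrec, Nat.factorial_succ]
    push_cast
    field_simp
    ring
  have hpos : 0 < (p + 1) * expPolyIntegral p ((j : ℤ) - p - 1) / (j + 1).factorial :=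
    div_pos (mul_pos (by positivity) (expPolyIntegral_pos _ _)) (by positivity)
  linarith

/-- The eigenvalues are strictly increasing in `j`:
`λ^p_0 < λ^p_1 < ⋯ < λ^p_p`. -/
theorem toeplitzExpEigenvalue_strictMono (p j : ℕ) (hj : j < p) :
    toeplitzExpEigenvalue p j < toeplitzExpEigenvalue p (j + 1) :=
  toeplitzExpEigenvalue_strictMono_general p j
end

section
/- For every natural number p ≥ 1, (1/p!) · ∫_{0}^{∞} e^{-t} · t^{p+1} / (1+t) dt = 1 + ∑_{j=1}^{p} (−1)^j · (p−j)!/p! + ((−1)^{p+1}/p!) · ∫_{0}^{∞} e^{-t}/(1+t) dt. -/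
open MeasureTheory Set Real

noncomputable def Ifun (n : ℕ) : ℝ := ∫ t in Set.Ioi (0:ℝ), Real.exp (-t) * t ^ n / (1 + t)

lemma gamma_int (n : ℕ) : ∫ t in Set.Ioi (0:ℝ), Real.exp (-t) * t ^ n = n.factorial := by
  have h : (0:ℝ) < n + 1 := by positivity
  have := Real.Gamma_eq_integral h
  rw [Real.Gamma_nat_eq_factorial] at this
  rw [this]
  refine setIntegral_congr_fun measurableSet_Ioi fun x hx => ?_
  show Real.exp (-x) * x ^ n = Real.exp (-x) * x ^ ((n:ℝ) + 1 - 1)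
  symm
  rw [add_sub_cancel_right, Real.rpow_natCast]

lemma gamma_integrable (n : ℕ) :
    IntegrableOn (fun t => Real.exp (-t) * t ^ n) (Set.Ioi (0:ℝ)) := by
  have h : (0:ℝ) < n + 1 := by positivity
  have := Real.GammaIntegral_convergent h
  refine this.congr_fun (fun x hx => ?_) measurableSet_Ioi
  show Real.exp (-x) * x ^ ((n:ℝ) + 1 - 1) = Real.exp (-x) * x ^ n
  rw [add_sub_cancel_right, Real.rpow_natCast]

lemma I_integrable (n : ℕ) :
    IntegrableOn (fun t => Real.exp (-t) * t ^ n / (1 + t)) (Set.Ioi (0:ℝ)) := by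
  refine Integrable.mono' (gamma_integrable n) ?_ ?_
  · apply Measurable.aestronglyMeasurable
    exact ((Real.measurable_exp.comp measurable_neg).mul (measurable_id.pow_const n)).div
      (measurable_const.add measurable_id)
  · filter_upwards [ae_restrict_mem measurableSet_Ioi] with t ht
    have ht' : (0:ℝ) < t := ht
    have hnum : (0:ℝ) ≤ Real.exp (-t) * t ^ n :=
      mul_nonneg (Real.exp_pos _).le (pow_nonneg ht'.le n)
    rw [Real.norm_eq_abs, abs_of_nonneg (div_nonneg hnum (by linarith))]
    calc Real.exp (-t) * t ^ n / (1 + t) ≤ Real.exp (-t) * t ^ n / 1 := by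
          gcongr <;> linarith
      _ = Real.exp (-t) * t ^ n := by ring

lemma I_rec (n : ℕ) : Ifun (n + 1) = n.factorial - Ifun n := by
  have key : ∀ t ∈ Set.Ioi (0:ℝ),
      Real.exp (-t) * t ^ (n+1) / (1 + t)
        = Real.exp (-t) * t ^ n - Real.exp (-t) * t ^ n / (1 + t) := by
    intro t ht
    have h1 : (1:ℝ) + t ≠ 0 := by simp at ht; linarith
    field_simp
    ring
  unfold Ifun
  rw [setIntegral_congr_fun measurableSet_Ioi key,
    integral_sub (gamma_integrable n) (I_integrable n), gamma_int]

lemma I_closed (n : ℕ) : Ifun n = (-1:ℝ)^n * Ifun 0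
    + ∑ j ∈ Finset.range n, (-1:ℝ)^j * ((n - 1 - j).factorial : ℝ) := by
  induction n with
  | zero => simp
  | succ n ih =>
    rw [I_rec, ih, Finset.sum_range_succ']
    have : ∀ j ∈ Finset.range n, (-1:ℝ)^(j+1) * ((n + 1 - 1 - (j+1)).factorial : ℝ)
        = -((-1:ℝ)^j * ((n - 1 - j).factorial : ℝ)) := by
      intro j hj
      have : n + 1 - 1 - (j + 1) = n - 1 - j := by omega
      rw [this]; ring
    rw [Finset.sum_congr rfl this, Finset.sum_neg_distrib]
    simp only [pow_succ]
    ring_nf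
    simp [Nat.sub_zero]
    ring

/-- Closed form for the largest eigenvalue of the Toeplitz operator with symbol
`e^{-1/|z|²}` on `ℂP¹`. -/
theorem toeplitz_expSymbol_max_eigenvalue (p : ℕ) (hp : 1 ≤ p) :
    (1 / (p.factorial : ℝ)) *
      ∫ t in Set.Ioi (0 : ℝ), Real.exp (-t) * t ^ (p + 1) / (1 + t) =
    1 + (∑ j ∈ Finset.Icc 1 p, (-1 : ℝ) ^ j * ((p - j).factorial : ℝ) / (p.factorial : ℝ)) +
      ((-1 : ℝ) ^ (p + 1) / (p.factorial : ℝ)) *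
        ∫ t in Set.Ioi (0 : ℝ), Real.exp (-t) / (1 + t) := by
  have hfac : (p.factorial : ℝ) ≠ 0 := Nat.cast_ne_zero.mpr p.factorial_ne_zero
  have hI0 : Ifun 0 = ∫ t in Set.Ioi (0:ℝ), Real.exp (-t) / (1 + t) := by
    unfold Ifun; simp
  have hset : Finset.range (p+1) = insert 0 (Finset.Icc 1 p) := by
    ext j; simp [Finset.mem_range, Finset.mem_Icc]; omega
  have hA := I_closed (p+1)
  rw [hset, Finset.sum_insert (by simp)] at hA
  simp only [Nat.add_sub_cancel, Nat.sub_zero, pow_zero, one_mul] at hA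
  have hL : (∫ t in Set.Ioi (0:ℝ), Real.exp (-t) * t ^ (p + 1) / (1 + t)) = Ifun (p+1) := rfl
  rw [hL, hA, hI0]
  rw [mul_add, mul_add, Finset.mul_sum]
  have hterm : ∀ j ∈ Finset.Icc 1 p,
      1 / (p.factorial : ℝ) * ((-1:ℝ)^j * ((p - j).factorial : ℝ))
        = (-1:ℝ)^j * ((p - j).factorial : ℝ) / (p.factorial : ℝ) := fun j _ => by ring
  rw [Finset.sum_congr rfl hterm]
  have h1 : 1 / (p.factorial : ℝ) * (p.factorial : ℝ) = 1 := one_div_mul_cancel hfac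
  rw [h1]
  ring
end

section
/- There exists a constant C > 0 such that for every natural number p ≥ 2, | (1/p!) · ∫_{0}^{∞} e^{-t} · t^{p+1}/(1+t) dt − 1 + 1/p | ≤ C / p². Equivalently, λ^p_max = 1 − 1/p + O(p^{-2}) as p → ∞. -/
/-!
Since `t ^ (n + 1) / (1 + t) + t ^ n / (1 + t) = t ^ n`, the integrals
`I n = ∫ e^{-t} t^n / (1 + t)` satisfy `I (n + 1) = n! - I n`. Applying this twice,
`I (p + 1) = p! - (p - 1)! + I (p - 1)`, so the error term equals `I (p - 1) / p!`,
and `0 ≤ I (p - 1) ≤ (p - 2)!` bounds it by `1 / (p (p - 1)) ≤ 2 / p²`.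
-/

open MeasureTheory Set Real Nat

lemma integrableOn_exp_neg_mul_pow (n : ℕ) :
    IntegrableOn (fun t : ℝ => exp (-t) * t ^ n) (Ioi 0) := by
  refine (GammaIntegral_convergent (s := n + 1) (by positivity)).congr_fun (fun t _ => ?_)
    measurableSet_Ioi
  simp only [add_sub_cancel_right, rpow_natCast]

lemma integral_exp_neg_mul_pow (n : ℕ) :
    ∫ t in Ioi (0 : ℝ), exp (-t) * t ^ n = n ! := by
  rw [← Gamma_nat_eq_factorial, Gamma_eq_integral (by positivity)]
  simp only [add_sub_cancel_right, rpow_natCast]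

lemma integrableOn_exp_neg_mul_pow_div_one_add (n : ℕ) :
    IntegrableOn (fun t : ℝ => exp (-t) * t ^ n / (1 + t)) (Ioi 0) := by
  refine (integrableOn_exp_neg_mul_pow n).mono'
    (by fun_prop : Measurable fun t : ℝ => exp (-t) * t ^ n / (1 + t)).aestronglyMeasurable ?_
  filter_upwards [ae_restrict_mem measurableSet_Ioi] with t (ht : 0 < t)
  rw [Real.norm_of_nonneg (by positivity)]
  exact div_le_self (by positivity) (by linarith)

lemma integral_exp_neg_mul_pow_div_one_add_nonneg (n : ℕ) :
    0 ≤ ∫ t in Ioi (0 : ℝ), exp (-t) * t ^ n / (1 + t) :=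
  setIntegral_nonneg measurableSet_Ioi fun t (ht : 0 < t) => by positivity

lemma integral_exp_neg_mul_pow_succ_div_one_add_le (n : ℕ) :
    ∫ t in Ioi (0 : ℝ), exp (-t) * t ^ (n + 1) / (1 + t) ≤ n ! := by
  rw [← integral_exp_neg_mul_pow]
  refine setIntegral_mono_on (integrableOn_exp_neg_mul_pow_div_one_add _)
    (integrableOn_exp_neg_mul_pow n) measurableSet_Ioi fun t (ht : 0 < t) => ?_
  rw [div_le_iff₀ (by linarith), pow_succ]
  nlinarith [mul_nonneg (exp_pos (-t)).le (pow_pos ht n).le]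

lemma integral_exp_neg_mul_pow_succ_div_one_add (n : ℕ) :
    ∫ t in Ioi (0 : ℝ), exp (-t) * t ^ (n + 1) / (1 + t) =
      (n ! : ℝ) - ∫ t in Ioi (0 : ℝ), exp (-t) * t ^ n / (1 + t) := by
  rw [eq_sub_iff_add_eq, ← integral_add (integrableOn_exp_neg_mul_pow_div_one_add _)
    (integrableOn_exp_neg_mul_pow_div_one_add n), ← integral_exp_neg_mul_pow]
  refine setIntegral_congr_fun measurableSet_Ioi fun t (ht : 0 < t) => ?_
  field_simp
  ring

lemma factorial_div_factorial_add_two_le (k : ℕ) :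
    (k ! : ℝ) / (k + 2) ! ≤ 2 / ((k + 2 : ℕ) : ℝ) ^ 2 := by
  have hk : (k + 2) ! = (k + 2) * (k + 1) * k ! := by
    rw [factorial_succ, factorial_succ]; ring
  rw [hk, div_le_div_iff₀ (by positivity) (by positivity)]
  push_cast
  have : (0 : ℝ) ≤ k ! * k ^ 2 := by positivity
  nlinarith

/-- Asymptotics of the largest eigenvalue: `λ^p_max = 1 - 1/p + O(p^{-2})`. -/
theorem toeplitz_expSymbol_max_eigenvalue_asymptotics :
    ∃ C > 0, ∀ p : ℕ, 2 ≤ p →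
      |(1 / (p.factorial : ℝ)) *
          (∫ t in Set.Ioi (0 : ℝ), Real.exp (-t) * t ^ (p + 1) / (1 + t)) - 1 + 1 / (p : ℝ)| ≤
        C / (p : ℝ) ^ 2 := by
  refine ⟨2, two_pos, fun p hp => ?_⟩
  obtain ⟨k, rfl⟩ : ∃ k, p = k + 2 := ⟨p - 2, by omega⟩
  set J := ∫ t in Ioi (0 : ℝ), exp (-t) * t ^ (k + 1) / (1 + t)
  have hJ₀ : 0 ≤ J := integral_exp_neg_mul_pow_div_one_add_nonneg _
  have hJ : J ≤ k ! := integral_exp_neg_mul_pow_succ_div_one_add_le k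
  have error_eq : 1 / ((k + 2) ! : ℝ) *
      (((k + 2) ! : ℝ) - (((k + 1) ! : ℝ) - J)) - 1 + 1 / ((k + 2 : ℕ) : ℝ) = J / (k + 2) ! := by
    rw [factorial_succ (k + 1)]
    push_cast
    field_simp
    ring
  rw [integral_exp_neg_mul_pow_succ_div_one_add, integral_exp_neg_mul_pow_succ_div_one_add,
    error_eq, abs_of_nonneg (by positivity)]
  exact (div_le_div_of_nonneg_right hJ (by positivity)).trans
    (factorial_div_factorial_add_two_le k)
end

section
/- For every natural number p ≥ 1, (p+1) · ∫_{0}^{∞} e^{-t} · t^p / (1+t)^{p+2} dt ≥ exp(−2√p − 1/√p). -/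
/-!
Integration by parts turns `(p + 1) ∫ e^{-t} t^p / (1 + t)^{p+2}` into
`∫ e^{-t} (t / (1 + t))^{p+1}`, and `1 + 1/t ≤ e^{1/t}` bounds this integrand below by
`e^{-t - s²/t}` with `s = √(p + 1)`. Since `t + s²/t = 2s + (t - s)²/t`, the estimate
`e^{-x} ≥ 1 - x` integrated over `[s - 2/3, s + 2/3]` gives `∫ e^{-t - s²/t} ≥ e^{-2s}`,
and finally `2√(p + 1) ≤ 2√p + 1/√p`.
-/

open MeasureTheory Real Set Filter Topology

lemma exp_neg_inv_le_div_one_add {t : ℝ} (ht : 0 < t) : exp (-t⁻¹) ≤ t / (1 + t) := by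
  rw [exp_neg, inv_le_comm₀ (exp_pos _) (by positivity), inv_div, add_div, div_self ht.ne',
    one_div]
  exact add_one_le_exp _

lemma exp_neg_add_div_le (n : ℕ) {t : ℝ} (ht : 0 < t) :
    exp (-(t + n / t)) ≤ exp (-t) * (t / (1 + t)) ^ n := by
  have h : exp (-(t + n / t)) = exp (-t) * exp (-t⁻¹) ^ n := by
    rw [← exp_nat_mul, ← exp_add]; ring_nf
  rw [h]
  gcongr
  exact exp_neg_inv_le_div_one_add ht

lemma div_one_add_pow_le_one (n : ℕ) {t : ℝ} (ht : 0 ≤ t) : (t / (1 + t)) ^ n ≤ 1 :=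
  pow_le_one₀ (by positivity) ((div_le_one (by positivity)).2 (by linarith))

lemma exp_neg_two_mul_mul_one_sub_le (s : ℝ) {t : ℝ} (ht : 0 < t) :
    exp (-(2 * s)) * (1 - (t - s) ^ 2 / t) ≤ exp (-(t + s ^ 2 / t)) := by
  have h : -(t + s ^ 2 / t) = -(2 * s) + -((t - s) ^ 2 / t) := by field_simp; ring
  rw [h, exp_add]
  gcongr
  linarith [add_one_le_exp (-((t - s) ^ 2 / t))]

lemma two_mul_sqrt_add_one_le {x : ℝ} (hx : 0 < x) : 2 * √(x + 1) ≤ 2 * √x + 1 / √x := by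
  have hr : 0 < √x := sqrt_pos.2 hx
  rw [← le_div_iff₀' two_pos, sqrt_le_left (by positivity)]
  have h : ((2 * √x + 1 / √x) / 2) ^ 2 = √x ^ 2 + 1 + 1 / (4 * √x ^ 2) := by
    field_simp; ring
  rw [h, sq_sqrt hx.le]
  have : 0 ≤ 1 / (4 * x) := by positivity
  linarith

lemma integrableOn_Ioi_zero_of_norm_le_exp_neg {g : ℝ → ℝ}
    (hg : AEStronglyMeasurable g (volume.restrict (Ioi 0)))
    (hle : ∀ t > 0, ‖g t‖ ≤ exp (-t)) :
    IntegrableOn g (Ioi 0) := by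
  have hexp : IntegrableOn (fun t => exp (-t)) (Ioi 0) := by
    simpa using exp_neg_integrableOn_Ioi 0 one_pos
  exact hexp.mono' hg ((ae_restrict_iff' measurableSet_Ioi).2 (ae_of_all _ hle))

lemma integrableOn_exp_neg_add_div {c : ℝ} (hc : 0 ≤ c) :
    IntegrableOn (fun t => exp (-(t + c / t))) (Ioi 0) := by
  refine integrableOn_Ioi_zero_of_norm_le_exp_neg (by fun_prop) fun t ht => ?_
  rw [norm_of_nonneg (exp_nonneg _), exp_le_exp, neg_le_neg_iff, le_add_iff_nonneg_right]
  positivity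

lemma hasDerivAt_exp_neg_mul_div_one_add_pow (n : ℕ) {t : ℝ} (ht : 0 ≤ t) :
    HasDerivAt (fun x => exp (-x) * (x / (1 + x)) ^ (n + 1))
      ((n + 1) * (exp (-t) * t ^ n / (1 + t) ^ (n + 2)) -
        exp (-t) * (t / (1 + t)) ^ (n + 1)) t := by
  have h1t : 1 + t ≠ 0 := by positivity
  have hq : HasDerivAt (fun x => x / (1 + x)) (1 / (1 + t) ^ 2) t :=
    ((hasDerivAt_id' t).div ((hasDerivAt_id' t).const_add 1) h1t).congr_deriv (by ring)
  refine ((hasDerivAt_neg' t).exp.mul (hq.pow (n + 1))).congr_deriv ?_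
  simp only [Pi.pow_apply, add_tsub_cancel_right, div_pow]
  field_simp
  push_cast
  ring

lemma integrableOn_exp_neg_mul_div_one_add_pow (n : ℕ) :
    IntegrableOn (fun t => exp (-t) * (t / (1 + t)) ^ n) (Ioi 0) := by
  refine integrableOn_Ioi_zero_of_norm_le_exp_neg (by fun_prop) fun t ht => ?_
  rw [norm_of_nonneg (by positivity)]
  exact mul_le_of_le_one_right (exp_nonneg _) (div_one_add_pow_le_one n ht.le)

lemma integrableOn_exp_neg_mul_pow_div_one_add_pow (n : ℕ) :
    IntegrableOn (fun t => exp (-t) * t ^ n / (1 + t) ^ (n + 2)) (Ioi 0) := by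
  refine integrableOn_Ioi_zero_of_norm_le_exp_neg
    (Measurable.aestronglyMeasurable (by fun_prop)) fun t ht => ?_
  have h : exp (-t) * t ^ n / (1 + t) ^ (n + 2) =
      exp (-t) * (t / (1 + t)) ^ n / (1 + t) ^ 2 := by
    rw [div_pow, pow_add]
    field_simp
  rw [norm_of_nonneg (by positivity), h, div_le_iff₀ (by positivity)]
  calc exp (-t) * (t / (1 + t)) ^ n ≤ exp (-t) :=
        mul_le_of_le_one_right (exp_nonneg _) (div_one_add_pow_le_one n ht.le)
    _ ≤ exp (-t) * (1 + t) ^ 2 :=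
        le_mul_of_one_le_right (exp_nonneg _) (one_le_pow₀ (by linarith))

lemma tendsto_exp_neg_mul_div_one_add_pow (n : ℕ) :
    Tendsto (fun t => exp (-t) * (t / (1 + t)) ^ n) atTop (𝓝 0) := by
  refine tendsto_of_tendsto_of_tendsto_of_le_of_le' tendsto_const_nhds
    tendsto_exp_neg_atTop_nhds_zero ?_ ?_
  all_goals filter_upwards [eventually_ge_atTop 0] with t ht
  · positivity
  · exact mul_le_of_le_one_right (exp_nonneg _) (div_one_add_pow_le_one n ht)

lemma mul_integral_exp_neg_mul_pow_div_eq (p : ℕ) :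
    ((p : ℝ) + 1) * ∫ t in Ioi 0, exp (-t) * t ^ p / (1 + t) ^ (p + 2) =
      ∫ t in Ioi 0, exp (-t) * (t / (1 + t)) ^ (p + 1) := by
  have hf := integrableOn_exp_neg_mul_pow_div_one_add_pow p
  have hw := integrableOn_exp_neg_mul_div_one_add_pow (p + 1)
  have h := integral_Ioi_of_hasDerivAt_of_tendsto'
    (fun t ht => hasDerivAt_exp_neg_mul_div_one_add_pow p ht) ((hf.const_mul _).sub hw)
    (tendsto_exp_neg_mul_div_one_add_pow (p + 1))
  rw [integral_sub (hf.const_mul _) hw, integral_const_mul] at h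
  simp only [neg_zero, exp_zero, zero_div, ne_eq, add_eq_zero, one_ne_zero, and_false,
    not_false_eq_true, zero_pow, mul_zero, sub_zero] at h
  linarith

lemma integral_one_sub_sq_div (s c L : ℝ) :
    ∫ t in (s - L)..(s + L), (1 - (t - s) ^ 2 / c) = 2 * L - 2 * L ^ 3 / (3 * c) := by
  rw [intervalIntegral.integral_comp_sub_right (fun x => 1 - x ^ 2 / c)]
  simp only [sub_sub_cancel_left, add_sub_cancel_left, intervalIntegrable_const,
    intervalIntegral.intervalIntegrable_pow, IntervalIntegrable.div_const,
    intervalIntegral.integral_sub, intervalIntegral.integral_const, smul_eq_mul, mul_one,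
    intervalIntegral.integral_div, integral_pow]
  ring

lemma exp_neg_two_mul_le_integral_exp_neg_add_sq_div {s : ℝ} (hs : 4 / 3 ≤ s) :
    exp (-(2 * s)) ≤ ∫ t in Ioi 0, exp (-(t + s ^ 2 / t)) := by
  set c := s - 2 / 3 with hc
  have hc23 : 2 / 3 ≤ c := by linarith
  have hlower : ∀ t ∈ Icc (s - 2 / 3) (s + 2 / 3),
      exp (-(2 * s)) * (1 - (t - s) ^ 2 / c) ≤ exp (-(t + s ^ 2 / t)) := by
    intro t ht
    have ht0 : 0 < t := by linarith [ht.1]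
    refine le_trans ?_ (exp_neg_two_mul_mul_one_sub_le s ht0)
    gcongr
    exact ht.1
  have hcont : ContinuousOn (fun t => exp (-(t + s ^ 2 / t))) (uIcc (s - 2 / 3) (s + 2 / 3)) := by
    refine (continuousOn_id.add (continuousOn_const.div continuousOn_id ?_)).neg.rexp
    intro t ht
    rw [uIcc_of_le (by linarith)] at ht
    exact (lt_of_lt_of_le (by linarith) ht.1).ne'
  calc exp (-(2 * s)) ≤ exp (-(2 * s)) * (2 * (2 / 3) - 2 * (2 / 3) ^ 3 / (3 * c)) := by
        refine le_mul_of_one_le_right (exp_nonneg _) ?_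
        have h : 2 * (2 / 3) ^ 3 / (3 * c) ≤ 1 / 3 := by
          rw [div_le_iff₀ (by positivity)]
          linarith
        linarith
    _ = ∫ t in (s - 2 / 3)..(s + 2 / 3), exp (-(2 * s)) * (1 - (t - s) ^ 2 / c) := by
        rw [intervalIntegral.integral_const_mul, integral_one_sub_sq_div]
    _ ≤ ∫ t in (s - 2 / 3)..(s + 2 / 3), exp (-(t + s ^ 2 / t)) :=
        intervalIntegral.integral_mono_on (by linarith)
          (Continuous.intervalIntegrable (by fun_prop) _ _) hcont.intervalIntegrable hlower
    _ ≤ ∫ t in Ioi 0, exp (-(t + s ^ 2 / t)) := by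
        rw [intervalIntegral.integral_of_le (by linarith)]
        refine setIntegral_mono_set (integrableOn_exp_neg_add_div (sq_nonneg s))
          (ae_of_all _ fun t => exp_nonneg _)
          (Ioc_subset_Ioi_self.trans (Ioi_subset_Ioi (by linarith))).eventuallyLE

/-- Lower bound for the smallest eigenvalue of the Toeplitz operator with symbol
`e^{-1/|z|²}` on `ℂP¹`. -/
theorem toeplitz_expSymbol_min_eigenvalue_lower (p : ℕ) (hp : 1 ≤ p) :
    Real.exp (-2 * Real.sqrt p - 1 / Real.sqrt p) ≤
      ((p : ℝ) + 1) *
        ∫ t in Set.Ioi (0 : ℝ), Real.exp (-t) * t ^ p / (1 + t) ^ (p + 2) := by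
  have hp1 : (1 : ℝ) ≤ p := by exact_mod_cast hp
  set s := √((p : ℝ) + 1)
  have hs2 : s ^ 2 = p + 1 := sq_sqrt (by positivity)
  have hs : 4 / 3 ≤ s := (le_sqrt' (by norm_num)).2 (by linarith)
  rw [mul_integral_exp_neg_mul_pow_div_eq]
  calc exp (-2 * √p - 1 / √p) ≤ exp (-(2 * s)) := by
        rw [exp_le_exp]
        linarith [two_mul_sqrt_add_one_le (zero_lt_one.trans_le hp1)]
    _ ≤ ∫ t in Ioi 0, exp (-(t + s ^ 2 / t)) :=
        exp_neg_two_mul_le_integral_exp_neg_add_sq_div hs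
    _ ≤ ∫ t in Ioi 0, exp (-t) * (t / (1 + t)) ^ (p + 1) := by
        refine setIntegral_mono_on (integrableOn_exp_neg_add_div (sq_nonneg s))
          (integrableOn_exp_neg_mul_div_one_add_pow _) measurableSet_Ioi fun t ht => ?_
        simpa [hs2] using exp_neg_add_div_le (p + 1) ht
end

section
/- There exists a constant C > 0 such that for every natural number p ≥ 1, (p+1) · ∫_{0}^{∞} e^{-t} · t^p / (1+t)^{p+2} dt ≤ C · √p · exp(−2√p). -/
/-!
Write `s = 1 + t` and `q = √p`. Since `(t / s) ^ p = (1 - 1 / s) ^ p ≤ exp (-p / s)`, the integrand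
is at most `e · exp (-(s + q² / s)) / s²`, and `s + q² / s = 2q + (s - q)² / s`. Where `s ≥ q / 2`
the weight `1 / s²` is at most `9 / (s + q)²`, whose integral is `O(1 / q)`; where `s < q / 2` the
exponent exceeds `2q` by at least `q / 2`. So the integral is `O(exp (-2q) / q)`, and the factor
`p + 1 = q² + 1` turns this into `O(q · exp (-2q))`.
-/

open MeasureTheory Set Filter Real Topology

lemma hasDerivAt_neg_inv_add {c x : ℝ} (hx : x + c ≠ 0) :
    HasDerivAt (fun t : ℝ => -(t + c)⁻¹) (1 / (x + c) ^ 2) x := by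
  simpa [neg_div] using (((hasDerivAt_id' x).add_const c).fun_inv hx).fun_neg

lemma tendsto_neg_inv_add_atTop (c : ℝ) :
    Tendsto (fun t : ℝ => -(t + c)⁻¹) atTop (𝓝 0) := by
  simpa using (tendsto_inv_atTop_zero.comp (tendsto_atTop_add_const_right _ c tendsto_id)).neg

lemma integrableOn_Ioi_one_div_add_sq {c : ℝ} (hc : 0 < c) :
    IntegrableOn (fun t : ℝ => 1 / (t + c) ^ 2) (Ioi 0) :=
  integrableOn_Ioi_deriv_of_nonneg' (fun x hx => hasDerivAt_neg_inv_add (by grind))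
    (fun x _ => by positivity) (tendsto_neg_inv_add_atTop c)

lemma integral_Ioi_one_div_add_sq {c : ℝ} (hc : 0 < c) :
    ∫ t in Ioi (0 : ℝ), 1 / (t + c) ^ 2 = 1 / c := by
  rw [integral_Ioi_of_hasDerivAt_of_nonneg' (fun x hx => hasDerivAt_neg_inv_add (by grind))
    (fun x _ => by positivity) (tendsto_neg_inv_add_atTop c)]
  simp

lemma exp_neg_mul_pow_div_le (p : ℕ) {t : ℝ} (ht : 0 ≤ t) :
    exp (-t) * t ^ p / (1 + t) ^ (p + 2) ≤
      exp 1 * (exp (-((1 + t) + p / (1 + t))) / (1 + t) ^ 2) := by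
  have hs : 0 < 1 + t := by linarith
  have hratio : (t / (1 + t)) ^ p ≤ exp (-(p / (1 + t))) := by
    calc (t / (1 + t)) ^ p = (1 - 1 / (1 + t)) ^ p := by field_simp; ring
      _ ≤ exp (-(1 / (1 + t))) ^ p := by
        gcongr
        · rw [sub_nonneg, div_le_one hs]; linarith
        · exact one_sub_le_exp_neg _
      _ = exp (-(p / (1 + t))) := by rw [← exp_nat_mul]; ring_nf
  calc exp (-t) * t ^ p / (1 + t) ^ (p + 2)
      = exp (-t) * (t / (1 + t)) ^ p / (1 + t) ^ 2 := by rw [div_pow, pow_add]; field_simp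
    _ ≤ exp (-t) * exp (-(p / (1 + t))) / (1 + t) ^ 2 := by gcongr
    _ = exp 1 * (exp (-((1 + t) + p / (1 + t))) / (1 + t) ^ 2) := by
        rw [← exp_add, mul_div_assoc', ← exp_add]; ring_nf

lemma exp_neg_add_sq_div_div_sq_le {s q : ℝ} (hs : 0 < s) (hq : 0 ≤ q) :
    exp (-(s + q ^ 2 / s)) / s ^ 2 ≤
      exp (-(2 * q)) * (9 / (s + q) ^ 2 + exp (-(q / 2)) / s ^ 2) := by
  have hsplit : s + q ^ 2 / s = 2 * q + (s - q) ^ 2 / s := by field_simp; ring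
  rcases le_or_gt q (2 * s) with hqs | hqs
  · have hexp : exp (-(s + q ^ 2 / s)) ≤ exp (-(2 * q)) := by
      rw [exp_le_exp, hsplit]; have := div_nonneg (sq_nonneg (s - q)) hs.le; linarith
    have hsq : 1 / s ^ 2 ≤ 9 / (s + q) ^ 2 := by
      rw [div_le_div_iff₀ (by positivity) (by positivity)]; nlinarith
    calc exp (-(s + q ^ 2 / s)) / s ^ 2 ≤ exp (-(2 * q)) * (9 / (s + q) ^ 2) := by
          rw [div_eq_mul_one_div]; gcongr
      _ ≤ _ := by gcongr; exact le_add_of_nonneg_right (by positivity)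
  · have hexp : exp (-(s + q ^ 2 / s)) ≤ exp (-(2 * q)) * exp (-(q / 2)) := by
      rw [← exp_add, exp_le_exp, hsplit]
      have : q / 2 ≤ (s - q) ^ 2 / s := by rw [le_div_iff₀ hs]; nlinarith
      linarith
    calc exp (-(s + q ^ 2 / s)) / s ^ 2 ≤ exp (-(2 * q)) * (exp (-(q / 2)) / s ^ 2) := by
          rw [mul_div_assoc']; gcongr
      _ ≤ _ := by gcongr; exact le_add_of_nonneg_left (by positivity)

lemma sq_add_one_mul_le_thirteen_mul {q : ℝ} (hq : 1 ≤ q) :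
    (q ^ 2 + 1) * (9 / (1 + q) + exp (-(q / 2))) ≤ 13 * q := by
  have hexp : q * exp (-(q / 2)) ≤ 2 := by
    have := add_one_le_exp (q / 2)
    rw [exp_neg, ← div_eq_mul_inv, div_le_iff₀ (exp_pos _)]; linarith
  have h1 : (q ^ 2 + 1) * (9 / (1 + q)) ≤ 9 * q := by
    rw [mul_div_assoc', div_le_iff₀ (by linarith)]; nlinarith
  have h2 : (q ^ 2 + 1) * exp (-(q / 2)) ≤ 4 * q := by
    nlinarith [exp_pos (-(q / 2))]
  linarith

lemma integral_exp_neg_mul_pow_div_le (p : ℕ) :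
    ∫ t in Ioi (0 : ℝ), exp (-t) * t ^ p / (1 + t) ^ (p + 2) ≤
      exp 1 * exp (-(2 * √p)) * (9 / (1 + √p) + exp (-(√p / 2))) := by
  set q := √(p : ℝ)
  have hq : 0 ≤ q := sqrt_nonneg _
  have hp : (p : ℝ) = q ^ 2 := (sq_sqrt p.cast_nonneg).symm
  set g : ℝ → ℝ := fun t => exp 1 * exp (-(2 * q)) *
    (9 * (1 / (t + (1 + q)) ^ 2) + exp (-(q / 2)) * (1 / (t + 1) ^ 2))
  have hpeak := (integrableOn_Ioi_one_div_add_sq (c := 1 + q) (by positivity)).const_mul 9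
  have htail := (integrableOn_Ioi_one_div_add_sq one_pos).const_mul (exp (-(q / 2)))
  have hg : ∫ t in Ioi (0 : ℝ), g t =
      exp 1 * exp (-(2 * q)) * (9 / (1 + q) + exp (-(q / 2))) := by
    rw [integral_const_mul,
      integral_add hpeak htail, integral_const_mul, integral_const_mul,
      integral_Ioi_one_div_add_sq (by positivity), integral_Ioi_one_div_add_sq one_pos]
    ring
  rw [← hg]
  refine integral_mono_of_nonneg ?_ ((hpeak.add htail).const_mul _) ?_
  · filter_upwards [ae_restrict_mem measurableSet_Ioi] with t (ht : 0 < t)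
    positivity
  · filter_upwards [ae_restrict_mem measurableSet_Ioi] with t (ht : 0 < t)
    calc exp (-t) * t ^ p / (1 + t) ^ (p + 2)
        ≤ exp 1 * (exp (-((1 + t) + q ^ 2 / (1 + t))) / (1 + t) ^ 2) := by
          rw [← hp]; exact exp_neg_mul_pow_div_le p ht.le
      _ ≤ exp 1 * (exp (-(2 * q)) * (9 / (1 + t + q) ^ 2 + exp (-(q / 2)) / (1 + t) ^ 2)) := by
          gcongr; exact exp_neg_add_sq_div_div_sq_le (by positivity) hq
      _ = g t := by simp only [g]; ring

/-- Upper bound for the smallest eigenvalue of the Toeplitz operator with symbol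
`e^{-1/|z|²}` on `ℂP¹`. -/
theorem toeplitz_expSymbol_min_eigenvalue_upper :
    ∃ C > 0, ∀ p : ℕ, 1 ≤ p →
      ((p : ℝ) + 1) *
          (∫ t in Set.Ioi (0 : ℝ), Real.exp (-t) * t ^ p / (1 + t) ^ (p + 2)) ≤
        C * Real.sqrt p * Real.exp (-2 * Real.sqrt p) := by
  refine ⟨13 * exp 1, by positivity, fun p hp => ?_⟩
  have hq : 1 ≤ √(p : ℝ) := one_le_sqrt.mpr (by exact_mod_cast hp)
  have hp' : (p : ℝ) + 1 = √p ^ 2 + 1 := by rw [sq_sqrt p.cast_nonneg]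
  calc ((p : ℝ) + 1) * ∫ t in Ioi (0 : ℝ), exp (-t) * t ^ p / (1 + t) ^ (p + 2)
      ≤ (√p ^ 2 + 1) * (exp 1 * exp (-(2 * √p)) * (9 / (1 + √p) + exp (-(√p / 2)))) := by
        rw [hp']; gcongr; exact integral_exp_neg_mul_pow_div_le p
    _ = exp 1 * exp (-(2 * √p)) * ((√p ^ 2 + 1) * (9 / (1 + √p) + exp (-(√p / 2)))) := by ring
    _ ≤ exp 1 * exp (-(2 * √p)) * (13 * √p) :=
        mul_le_mul_of_nonneg_left (sq_add_one_mul_le_thirteen_mul hq) (by positivity)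
    _ = 13 * exp 1 * √p * exp (-2 * √p) := by ring_nf
end

section
/- The limit lim_{p→∞} (1/√p) · log( (p+1) · ∫_{0}^{∞} e^{-t} · t^p / (1+t)^{p+2} dt ) = −2 holds, where p ranges over the natural numbers tending to infinity. -/
open MeasureTheory Filter Set Real Topology

/-! The integrand is `e^{-t} (t/(1+t))^p (1+t)^{-2}`. Since `1 - x ≤ e^{-x}` and `1 + x ≤ e^x`, the
factor `e^{-t} (t/(1+t))^p` lies between `exp (-t - p/t)` and `exp (-t - p/(1+t))`. By AM-GM the upper
bound is at most `e^{1 - 2√p}` for every `t`, and on the window `(√p, √p + 1]` around the maximiser the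
lower bound is at least `e^{-2√p - 1}`. As `∫ (1+t)^{-2} = 1`, the logarithm of `(p+1)` times the
integral is `-2√p + O(log p)`. -/

lemma hasDerivAt_neg_inv_one_add {x : ℝ} (hx : 1 + x ≠ 0) :
    HasDerivAt (fun t : ℝ => -(1 + t)⁻¹) ((1 + x) ^ 2)⁻¹ x :=
  (((hasDerivAt_id x).const_add 1).inv hx).neg.congr_deriv (by simp only [id]; ring)

lemma tendsto_neg_inv_one_add_atTop : Tendsto (fun t : ℝ => -(1 + t)⁻¹) atTop (𝓝 0) := by
  simpa using
    (tendsto_inv_atTop_zero.comp (tendsto_atTop_add_const_left atTop (1 : ℝ) tendsto_id)).neg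

lemma integral_Ioi_zero_inv_sq_one_add : ∫ t in Ioi (0 : ℝ), ((1 + t) ^ 2)⁻¹ = 1 := by
  simpa using integral_Ioi_of_hasDerivAt_of_nonneg' (a := 0)
    (fun x (hx : 0 ≤ x) => hasDerivAt_neg_inv_one_add (by positivity))
    (fun x _ => by positivity) tendsto_neg_inv_one_add_atTop

lemma integrableOn_Ioi_zero_inv_sq_one_add : IntegrableOn (fun t : ℝ => ((1 + t) ^ 2)⁻¹) (Ioi 0) :=
  integrableOn_Ioi_deriv_of_nonneg'
    (fun x (hx : 0 ≤ x) => hasDerivAt_neg_inv_one_add (by positivity))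
    (fun x _ => by positivity) tendsto_neg_inv_one_add_atTop

lemma two_sqrt_le_add_div {a x : ℝ} (ha : 0 ≤ a) (hx : 0 < x) : 2 * √a ≤ x + a / x := by
  rw [← sub_nonneg, show x + a / x - 2 * √a = (x - √a) ^ 2 / x by
    field_simp; rw [sub_sq, sq_sqrt ha]; ring]
  positivity

lemma div_one_add_pow_le_exp {t : ℝ} (ht : 0 ≤ t) (n : ℕ) :
    (t / (1 + t)) ^ n ≤ exp (-(n / (1 + t))) := by
  have h : t / (1 + t) ≤ exp (-(1 + t)⁻¹) := by
    convert one_sub_le_exp_neg (1 + t)⁻¹ using 1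
    field_simp; ring
  calc (t / (1 + t)) ^ n ≤ exp (-(1 + t)⁻¹) ^ n := by gcongr
    _ = exp (-(n / (1 + t))) := by rw [← exp_nat_mul]; ring_nf

lemma exp_neg_div_le_div_one_add_pow {t : ℝ} (ht : 0 < t) (n : ℕ) :
    exp (-(n / t)) ≤ (t / (1 + t)) ^ n := by
  have h : exp (-t⁻¹) ≤ t / (1 + t) := by
    rw [exp_neg, inv_le_comm₀ (exp_pos _) (by positivity)]
    have h1 : (t / (1 + t))⁻¹ = t⁻¹ + 1 := by field_simp
    exact h1 ▸ add_one_le_exp t⁻¹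
  calc exp (-(n / t)) = exp (-t⁻¹) ^ n := by rw [← exp_nat_mul]; ring_nf
    _ ≤ (t / (1 + t)) ^ n := by gcongr

noncomputable def toeplitzIntegrand (p : ℕ) (t : ℝ) : ℝ := exp (-t) * t ^ p / (1 + t) ^ (p + 2)

lemma toeplitzIntegrand_nonneg (p : ℕ) {t : ℝ} (ht : 0 ≤ t) : 0 ≤ toeplitzIntegrand p t := by
  unfold toeplitzIntegrand; positivity

lemma toeplitzIntegrand_eq (p : ℕ) {t : ℝ} (ht : 1 + t ≠ 0) :
    toeplitzIntegrand p t = exp (-t) * (t / (1 + t)) ^ p * ((1 + t) ^ 2)⁻¹ := by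
  unfold toeplitzIntegrand
  rw [div_pow, pow_add]
  field_simp

lemma toeplitzIntegrand_le (p : ℕ) {t : ℝ} (ht : 0 ≤ t) :
    toeplitzIntegrand p t ≤ exp (1 - 2 * √p) * ((1 + t) ^ 2)⁻¹ := by
  have h1t : 0 < 1 + t := by positivity
  have hamgm := two_sqrt_le_add_div (Nat.cast_nonneg p) h1t
  rw [toeplitzIntegrand_eq p h1t.ne']
  gcongr
  calc exp (-t) * (t / (1 + t)) ^ p ≤ exp (-t) * exp (-(p / (1 + t))) := by
        gcongr; exact div_one_add_pow_le_exp ht p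
    _ = exp (-t - p / (1 + t)) := by rw [← exp_add]; ring_nf
    _ ≤ exp (1 - 2 * √p) := exp_le_exp.2 (by linarith)

lemma le_toeplitzIntegrand_of_mem_Ioc (p : ℕ) {t : ℝ} (ht : t ∈ Ioc (√p) (√p + 1)) :
    exp (-(2 * √p + 1)) / (2 + √p) ^ 2 ≤ toeplitzIntegrand p t := by
  obtain ⟨hst, hts⟩ := ht
  have ht0 : 0 < t := (sqrt_nonneg _).trans_lt hst
  have hpt : (p : ℝ) / t ≤ √p := by
    rw [div_le_iff₀ ht0]
    calc (p : ℝ) = √p * √p := (mul_self_sqrt (Nat.cast_nonneg p)).symm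
      _ ≤ √p * t := by gcongr
  rw [toeplitzIntegrand_eq p (by positivity), div_eq_mul_inv,
    show -(2 * √p + 1) = -(√p + 1) + -√p by ring, exp_add]
  gcongr ?_ * ?_ * ?_
  · exact exp_le_exp.2 (by linarith)
  · exact (exp_le_exp.2 (neg_le_neg hpt)).trans (exp_neg_div_le_div_one_add_pow ht0 p)
  · exact inv_anti₀ (by positivity) (pow_le_pow_left₀ (by positivity) (by linarith) 2)

lemma integrableOn_toeplitzIntegrand (p : ℕ) : IntegrableOn (toeplitzIntegrand p) (Ioi 0) := by
  refine (integrableOn_Ioi_zero_inv_sq_one_add.const_mul (exp (1 - 2 * √p))).mono' ?_ ?_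
  · unfold toeplitzIntegrand
    exact Measurable.aestronglyMeasurable (by fun_prop)
  · filter_upwards [ae_restrict_mem measurableSet_Ioi] with t (ht : 0 < t)
    rw [Real.norm_of_nonneg (toeplitzIntegrand_nonneg p ht.le)]
    exact toeplitzIntegrand_le p ht.le

lemma integral_toeplitzIntegrand_le (p : ℕ) :
    ∫ t in Ioi 0, toeplitzIntegrand p t ≤ exp (1 - 2 * √p) := by
  calc ∫ t in Ioi 0, toeplitzIntegrand p t
      ≤ ∫ t in Ioi 0, exp (1 - 2 * √p) * ((1 + t) ^ 2)⁻¹ :=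
        setIntegral_mono_on (integrableOn_toeplitzIntegrand p)
          (integrableOn_Ioi_zero_inv_sq_one_add.const_mul _) measurableSet_Ioi
          fun t ht => toeplitzIntegrand_le p (le_of_lt ht)
    _ = exp (1 - 2 * √p) := by
        rw [integral_const_mul, integral_Ioi_zero_inv_sq_one_add, mul_one]

lemma le_integral_toeplitzIntegrand (p : ℕ) :
    exp (-(2 * √p + 1)) / (2 + √p) ^ 2 ≤ ∫ t in Ioi 0, toeplitzIntegrand p t := by
  have hsub : Ioc (√p) (√p + 1) ⊆ Ioi 0 := fun t ht => (sqrt_nonneg _).trans_lt ht.1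
  calc exp (-(2 * √p + 1)) / (2 + √p) ^ 2
      = ∫ _ in Ioc (√p) (√p + 1), exp (-(2 * √p + 1)) / (2 + √p) ^ 2 := by
        simp [Real.volume_real_Ioc]
    _ ≤ ∫ t in Ioc (√p) (√p + 1), toeplitzIntegrand p t :=
        setIntegral_mono_on (integrableOn_const measure_Ioc_lt_top.ne)
          ((integrableOn_toeplitzIntegrand p).mono_set hsub) measurableSet_Ioc
          fun t ht => le_toeplitzIntegrand_of_mem_Ioc p ht
    _ ≤ ∫ t in Ioi 0, toeplitzIntegrand p t :=
        setIntegral_mono_set (integrableOn_toeplitzIntegrand p)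
          (ae_restrict_of_forall_mem measurableSet_Ioi fun t ht =>
            toeplitzIntegrand_nonneg p (le_of_lt ht))
          hsub.eventuallyLE

lemma abs_log_integral_toeplitzIntegrand_add_le (p : ℕ) :
    |log ((p + 1) * ∫ t in Ioi 0, toeplitzIntegrand p t) + 2 * √p| ≤ 1 + 2 * log (2 + √p) := by
  set I := ∫ t in Ioi 0, toeplitzIntegrand p t
  have hc : 0 < exp (-(2 * √p + 1)) / (2 + √p) ^ 2 := by positivity
  have hI : 0 < I := hc.trans_le (le_integral_toeplitzIntegrand p)
  have hlogI_le : log I ≤ 1 - 2 * √p := by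
    simpa using log_le_log hI (integral_toeplitzIntegrand_le p)
  have hlogI_ge : -(2 * √p + 1) - 2 * log (2 + √p) ≤ log I := by
    have := log_le_log hc (le_integral_toeplitzIntegrand p)
    rwa [log_div (exp_ne_zero _) (by positivity), log_exp, log_pow, Nat.cast_ofNat] at this
  have hlogp_nonneg : 0 ≤ log (p + 1) := log_nonneg (by simp)
  have hlogp_le : log (p + 1) ≤ 2 * log (2 + √p) := by
    rw [show 2 * log (2 + √p) = log ((2 + √p) ^ 2) by rw [log_pow]; norm_num]
    refine log_le_log (by positivity) ?_
    nlinarith [sq_sqrt (Nat.cast_nonneg (α := ℝ) p), sqrt_nonneg (p : ℝ)]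
  rw [log_mul (by positivity) hI.ne', abs_le]
  constructor <;> linarith

lemma tendsto_add_mul_log_add_div_atTop (a b c : ℝ) :
    Tendsto (fun x : ℝ => (a + b * log (c + x)) / x) atTop (𝓝 0) := by
  have hlog : Tendsto (fun x : ℝ => log (c + x) / x) atTop (𝓝 0) := by
    refine ((tendsto_pow_log_div_mul_add_atTop 1 (-c) 1 one_ne_zero).comp
      (tendsto_atTop_add_const_left atTop c tendsto_id)).congr fun x => ?_
    simp
  have := (tendsto_inv_atTop_zero.const_mul a).add (hlog.const_mul b)
  rw [mul_zero, mul_zero, add_zero] at this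
  exact this.congr fun x => by ring

lemma tendsto_one_div_mul_of_abs_sub_mul_le {α : Type*} {l : Filter α} {f g h : α → ℝ} {c : ℝ}
    (hfg : ∀ᶠ x in l, |f x - c * g x| ≤ h x) (hg : Tendsto g l atTop)
    (hh : Tendsto (fun x => h x / g x) l (𝓝 0)) :
    Tendsto (fun x => 1 / g x * f x) l (𝓝 c) := by
  have herr : Tendsto (fun x => (f x - c * g x) / g x) l (𝓝 0) := by
    refine squeeze_zero_norm' ?_ hh
    filter_upwards [hfg, hg.eventually_gt_atTop 0] with x hx hgx
    rw [norm_div, Real.norm_eq_abs, Real.norm_of_nonneg hgx.le]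
    gcongr
  refine (by simpa using herr.const_add c : Tendsto _ l (𝓝 c)).congr' ?_
  filter_upwards [hg.eventually_gt_atTop 0] with x hgx
  field_simp
  ring

/-- The stretched-exponential decay of the smallest Toeplitz eigenvalue:
`lim_{p→∞} (log λ^p_min)/√p = -2`. -/
theorem toeplitz_expSymbol_min_eigenvalue_limit :
    Tendsto (fun p : ℕ =>
        (1 / Real.sqrt p) *
          Real.log (((p : ℝ) + 1) *
            ∫ t in Set.Ioi (0 : ℝ), Real.exp (-t) * t ^ p / (1 + t) ^ (p + 2)))
      atTop (nhds (-2)) := by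
  have hsqrt : Tendsto (fun p : ℕ => √p) atTop atTop :=
    tendsto_sqrt_atTop.comp tendsto_natCast_atTop_atTop
  refine tendsto_one_div_mul_of_abs_sub_mul_le (g := fun p : ℕ => √p)
    (h := fun p => 1 + 2 * log (2 + √p)) (.of_forall fun p => ?_) hsqrt
    ((tendsto_add_mul_log_add_div_atTop 1 2 2).comp hsqrt)
  simpa [toeplitzIntegrand, sub_neg_eq_add] using abs_log_integral_toeplitzIntegrand_add_le p
end
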